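/- arXiv:1612.02968 — 4 statements merged into one kernel-verified Lean document; each statement's English description precedes it below -/
import Mathlib

section
/- Let M be a generalized Eulerian A_n(K)-module. Then for every i ≥ 0 the Koszul homology module H_i(X_1, …, X_n; M) is concentrated in degree zero; that is, H_i(X_1, …, X_n; M)_j = 0 for all j ≠ 0. -/
/-! ### The Weyl algebra `A_n(K)` as a quotient of the free algebra. -/

/-- The defining relations of the `n`-th Weyl algebra: the `X_i` commute, the `∂_i` commute,
and `∂_i X_j = X_j ∂_i + δ_{ij}`. -/
inductive WeylRel (K : Type) [Field K] (n : ℕ) :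
    FreeAlgebra K (Fin n ⊕ Fin n) → FreeAlgebra K (Fin n ⊕ Fin n) → Prop
  | xx (i j : Fin n) : WeylRel K n
      (FreeAlgebra.ι K (Sum.inl i) * FreeAlgebra.ι K (Sum.inl j))
      (FreeAlgebra.ι K (Sum.inl j) * FreeAlgebra.ι K (Sum.inl i))
  | dd (i j : Fin n) : WeylRel K n
      (FreeAlgebra.ι K (Sum.inr i) * FreeAlgebra.ι K (Sum.inr j))
      (FreeAlgebra.ι K (Sum.inr j) * FreeAlgebra.ι K (Sum.inr i))
  | dx (i j : Fin n) : WeylRel K n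
      (FreeAlgebra.ι K (Sum.inr i) * FreeAlgebra.ι K (Sum.inl j))
      (FreeAlgebra.ι K (Sum.inl j) * FreeAlgebra.ι K (Sum.inr i) + if i = j then 1 else 0)

/-- The `n`-th Weyl algebra over `K`. -/
abbrev WeylAlgebra (K : Type) [Field K] (n : ℕ) : Type := RingQuot (WeylRel K n)

/-- The variable `X_i` (degree `+1`) in the Weyl algebra. -/
noncomputable def Wx (K : Type) [Field K] {n : ℕ} (i : Fin n) : WeylAlgebra K n :=
  RingQuot.mkAlgHom K (WeylRel K n) (FreeAlgebra.ι K (Sum.inl i))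

/-- The partial derivative `∂_i` (degree `-1`) in the Weyl algebra. -/
noncomputable def Wd (K : Type) [Field K] {n : ℕ} (i : Fin n) : WeylAlgebra K n :=
  RingQuot.mkAlgHom K (WeylRel K n) (FreeAlgebra.ι K (Sum.inr i))

/-- The Euler operator `ℰ_n = ∑ X_i ∂_i`. -/
noncomputable def weylEuler (K : Type) [Field K] (n : ℕ) : WeylAlgebra K n :=
  ∑ i : Fin n, Wx K i * Wd K i

/-- The Euler operator `ℰ_r = ∑_{i < r} X_i ∂_i` of the subalgebra `A_r(K) ⊆ A_n(K)`. -/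
noncomputable def weylEulerUpTo (K : Type) [Field K] (n r : ℕ) : WeylAlgebra K n :=
  ∑ i ∈ Finset.univ.filter (fun i : Fin n => (i : ℕ) < r), Wx K i * Wd K i

/-- Monomials of degree `d` in the variables `X_1, …, X_n` inside the Weyl algebra. -/
def xMonomials (K : Type) [Field K] (n d : ℕ) : Set (WeylAlgebra K n) :=
  {w | ∃ l : List (Fin n), l.length = d ∧ w = (l.map (Wx K)).prod}

/-- `f` is a homogeneous polynomial of degree `d` in `R = K[X_1, …, X_n] ⊆ A_n(K)`. -/
def IsHomogPoly (K : Type) [Field K] {n : ℕ} (f : WeylAlgebra K n) (d : ℕ) : Prop :=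
  f ∈ Submodule.span K (xMonomials K n d)

/-! ### Graded (left) modules over the Weyl algebra. -/

/-- A graded left `A_n(K)`-module: a module over the Weyl algebra together with an internal
`ℤ`-grading, stable under `K` and such that `X_i` raises degree by one and `∂_i` lowers it
by one. -/
structure GWM (K : Type) [Field K] (n : ℕ) where
  carrier : Type
  [acg : AddCommGroup carrier]
  [mod : Module (WeylAlgebra K n) carrier]
  deg : ℤ → AddSubgroup carrier
  isInternal : DirectSum.IsInternal deg
  k_smul : ∀ (c : K) (j : ℤ) (m : carrier), m ∈ deg j →
    algebraMap K (WeylAlgebra K n) c • m ∈ deg j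
  x_smul : ∀ (i : Fin n) (j : ℤ) (m : carrier), m ∈ deg j → Wx K i • m ∈ deg (j + 1)
  d_smul : ∀ (i : Fin n) (j : ℤ) (m : carrier), m ∈ deg j → Wd K i • m ∈ deg (j - 1)

attribute [instance] GWM.acg GWM.mod

instance {K : Type} [Field K] {n : ℕ} : CoeSort (GWM K n) Type := ⟨GWM.carrier⟩

/-- A graded `A_n(K)`-module is *generalized Eulerian* if every homogeneous element `z`
is killed by some power of `ℰ_n - |z|`. -/
def GWM.IsGenEulerian {K : Type} [Field K] {n : ℕ} (M : GWM K n) : Prop :=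
  ∀ (j : ℤ) (m : M.carrier), m ∈ M.deg j →
    ∃ a : ℕ, 1 ≤ a ∧ ((weylEuler K n - (j : WeylAlgebra K n)) ^ a) • m = 0

/-- A graded module is concentrated in degree `d` if all other graded pieces vanish. -/
def GWM.ConcentratedIn {K : Type} [Field K] {n : ℕ} (M : GWM K n) (d : ℤ) : Prop :=
  ∀ j : ℤ, j ≠ d → M.deg j = ⊥

/-! ### Koszul (co)homology of a graded module with respect to commuting operators.

The Koszul complex of operators `u : Fin c → A_n(K)` on `M` has, in homological level `i`,
the module of functions from `i`-element subsets of `Fin c` to `M`.  Cohomology `H^ν` is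
homology in level `c - ν`. -/

/-- Level `i` of the Koszul complex on `c` operators with values in `M`. -/
abbrev KosLevel {K : Type} [Field K] {n : ℕ} (M : GWM K n) (c : ℕ) (i : ℤ) : Type :=
  {S : Finset (Fin c) // (S.card : ℤ) = i} → M.carrier

/-- The Koszul differential (from level `a` to level `b`; it is the genuine differential
when `b = a - 1`): `(dψ)(T) = ∑_{k ∉ T} (-1)^{|{x ∈ T | x < k}|} u_k • ψ(T ∪ {k})`. -/
noncomputable def kosDiff {K : Type} [Field K] {n : ℕ} {M : GWM K n} {c : ℕ}
    (u : Fin c → WeylAlgebra K n) (a b : ℤ) (ψ : KosLevel M c a)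
    (T : {S : Finset (Fin c) // (S.card : ℤ) = b}) : M.carrier :=
  ∑ k ∈ (T.1)ᶜ, ((-1 : ℤ) ^ ((T.1.filter (fun x => x < k)).card)) •
    (u k • (if h : (((insert k T.1).card : ℤ)) = a then ψ ⟨insert k T.1, h⟩ else 0))

/-- A Koszul `i`-chain is a cycle if the differential to level `i - 1` kills it. -/
def kosIsCycle {K : Type} [Field K] {n : ℕ} {M : GWM K n} {c : ℕ}
    (u : Fin c → WeylAlgebra K n) (i : ℤ) (φ : KosLevel M c i) : Prop :=
  ∀ T, kosDiff u i (i - 1) φ T = 0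

/-- A Koszul `i`-chain is a boundary if it is the image of an `(i+1)`-chain. -/
def kosIsBoundary {K : Type} [Field K] {n : ℕ} {M : GWM K n} {c : ℕ}
    (u : Fin c → WeylAlgebra K n) (i : ℤ) (φ : KosLevel M c i) : Prop :=
  ∃ ψ : KosLevel M c (i + 1), (fun T => kosDiff u (i + 1) i ψ T) = φ

/-- A Koszul `i`-chain is homogeneous of (internal) degree `j`: on a subset `S` its value
lies in degree `j - ∑_{k ∈ S} deg u_k`, where `du k` is the degree of the operator `u k`. -/
def kosHomog {K : Type} [Field K] {n : ℕ} {M : GWM K n} {c : ℕ}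
    (du : Fin c → ℤ) (i j : ℤ) (φ : KosLevel M c i) : Prop :=
  ∀ S : {S : Finset (Fin c) // (S.card : ℤ) = i}, φ S ∈ M.deg (j - ∑ k ∈ S.1, du k)

section Lemmas
variable {K : Type} [Field K] {n : ℕ}

lemma wd_wx (i j : Fin n) :
    Wd K i * Wx K j = Wx K j * Wd K i + if i = j then 1 else 0 := by
  have h := RingQuot.mkAlgHom_rel K (WeylRel.dx (K := K) (n := n) i j)
  simp only [map_mul, map_add] at h
  simpa [Wd, Wx, apply_ite (RingQuot.mkAlgHom K (WeylRel K n)), map_one, map_zero] using h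

lemma wx_comm (i j : Fin n) : Wx K i * Wx K j = Wx K j * Wx K i := by
  have h := RingQuot.mkAlgHom_rel K (WeylRel.xx (K := K) (n := n) i j)
  simpa [Wx, map_mul] using h

lemma euler_mul_wx (k : Fin n) :
    weylEuler K n * Wx K k = Wx K k * (weylEuler K n + 1) := by
  rw [weylEuler, Finset.sum_mul]
  have : ∀ i : Fin n, Wx K i * Wd K i * Wx K k
      = Wx K k * (Wx K i * Wd K i) + if i = k then Wx K k else 0 := by
    intro i
    rw [mul_assoc, wd_wx]
    rcases eq_or_ne i k with rfl | h
    · simp [mul_add, ← mul_assoc, wx_comm i]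
    · simp [h, mul_add, ← mul_assoc, wx_comm i k]
  rw [Finset.sum_congr rfl fun i _ => this i, Finset.sum_add_distrib,
    Finset.sum_ite_eq' Finset.univ k (fun _ => Wx K k)]
  simp [← Finset.mul_sum, weylEuler, mul_add]
end Lemmas
section Lemmas2
variable {K : Type} [Field K] {n : ℕ}

lemma eulerSub_mul_wx (c : K) (k : Fin n) :
    (weylEuler K n - algebraMap K _ c) * Wx K k
      = Wx K k * (weylEuler K n + 1 - algebraMap K _ c) := by
  rw [sub_mul, euler_mul_wx, Algebra.commutes c (Wx K k), mul_sub]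

lemma eulerSub_pow_mul_wx (c : K) (k : Fin n) (s : ℕ) :
    (weylEuler K n - algebraMap K _ c) ^ s * Wx K k
      = Wx K k * (weylEuler K n + 1 - algebraMap K _ c) ^ s := by
  induction s with
  | zero => simp
  | succ s ih =>
    rw [pow_succ, mul_assoc, eulerSub_mul_wx, ← mul_assoc, ih, mul_assoc, ← pow_succ]

noncomputable def wpoly (K : Type) [Field K] (n : ℕ) (q c : K) (a : ℕ) : WeylAlgebra K n :=
  ∑ s ∈ Finset.range a, algebraMap K _ ((-q⁻¹) ^ s * q⁻¹) *
    (weylEuler K n - algebraMap K _ c) ^ s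

noncomputable def wpoly' (K : Type) [Field K] (n : ℕ) (q c : K) (a : ℕ) : WeylAlgebra K n :=
  ∑ s ∈ Finset.range a, algebraMap K _ ((-q⁻¹) ^ s * q⁻¹) *
    (weylEuler K n + 1 - algebraMap K _ c) ^ s

lemma wpoly_mul_wx (q c : K) (a : ℕ) (k : Fin n) :
    wpoly K n q c a * Wx K k = Wx K k * wpoly' K n q c a := by
  rw [wpoly, wpoly', Finset.sum_mul, Finset.mul_sum]
  refine Finset.sum_congr rfl fun s _ => ?_
  rw [mul_assoc, eulerSub_pow_mul_wx, ← mul_assoc, Algebra.commutes, mul_assoc]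

lemma wpoly_mul (q c : K) (hq : q ≠ 0) (a : ℕ) :
    wpoly K n q c a * (weylEuler K n - algebraMap K _ c + algebraMap K _ q)
      = 1 - algebraMap K _ ((-q⁻¹) ^ a) * (weylEuler K n - algebraMap K _ c) ^ a := by
  set N := weylEuler K n - algebraMap K (WeylAlgebra K n) c with hN
  have key : ∀ s : ℕ, algebraMap K (WeylAlgebra K n) ((-q⁻¹) ^ s * q⁻¹) * N ^ s * (N + algebraMap K _ q)
      = algebraMap K _ ((-q⁻¹) ^ s) * N ^ s - algebraMap K _ ((-q⁻¹) ^ (s+1)) * N ^ (s+1) := by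
    intro s
    rw [mul_add]
    have h1 : algebraMap K (WeylAlgebra K n) ((-q⁻¹) ^ s * q⁻¹) * N ^ s * N
        = - (algebraMap K _ ((-q⁻¹) ^ (s+1)) * N ^ (s+1)) := by
      rw [pow_succ (-q⁻¹), pow_succ N]
      have h : (-q⁻¹) ^ s * -q⁻¹ = -((-q⁻¹) ^ s * q⁻¹) := by ring
      rw [h, map_neg, mul_assoc, neg_mul ((algebraMap K (WeylAlgebra K n)) ((-q⁻¹) ^ s * q⁻¹)), neg_neg]
    have h2 : algebraMap K (WeylAlgebra K n) ((-q⁻¹) ^ s * q⁻¹) * N ^ s * algebraMap K _ q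
        = algebraMap K _ ((-q⁻¹) ^ s) * N ^ s := by
      rw [mul_assoc, ← Algebra.commutes q (N ^ s), ← mul_assoc, ← map_mul]
      congr 2
      field_simp
    rw [h1, h2, neg_add_eq_sub]
  rw [wpoly, Finset.sum_mul]
  rw [Finset.sum_congr rfl fun s _ => key s]
  rw [Finset.sum_range_sub' (fun s => algebraMap K (WeylAlgebra K n) ((-q⁻¹) ^ s) * N ^ s) a]
  simp

end Lemmas2
section Lemmas3
variable {K : Type} [Field K] {n : ℕ}

/-- count of elements of `S` less than `k`. -/
def cnt {n : ℕ} (S : Finset (Fin n)) (k : Fin n) : ℕ := (S.filter (fun x => x < k)).card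

lemma cnt_insert {S : Finset (Fin n)} {k : Fin n} (hk : k ∉ S) (l : Fin n) :
    cnt (insert k S) l = cnt S l + (if k < l then 1 else 0) := by
  unfold cnt
  rw [Finset.filter_insert]
  split
  · rw [Finset.card_insert_of_notMem (fun h => hk (Finset.mem_of_mem_filter _ h))]
  · simp

lemma cnt_insert_self {S : Finset (Fin n)} {k : Fin n} (hk : k ∉ S) :
    cnt (insert k S) k = cnt S k := by
  rw [cnt_insert hk, if_neg (lt_irrefl k), add_zero]

lemma cnt_erase {S : Finset (Fin n)} {l : Fin n} (hl : l ∈ S) (k : Fin n) :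
    cnt S k = cnt (S.erase l) k + (if l < k then 1 else 0) := by
  conv_lhs => rw [← Finset.insert_erase hl]
  exact cnt_insert (Finset.notMem_erase l S) k

lemma cnt_erase_self (S : Finset (Fin n)) (l : Fin n) :
    cnt (S.erase l) l = cnt S l := by
  unfold cnt
  congr 1
  ext x
  simp only [Finset.mem_filter, Finset.mem_erase]
  exact ⟨fun h => ⟨h.1.2, h.2⟩, fun h => ⟨⟨ne_of_lt h.2, h.1⟩, h.2⟩⟩

lemma sign_cancel {S : Finset (Fin n)} {k l : Fin n} (hk : k ∉ S) (hl : l ∈ S) :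
    ((-1:ℤ) ^ cnt S k * (-1) ^ cnt (insert k S) l)
      = -((-1:ℤ) ^ cnt S l * (-1) ^ cnt (S.erase l) k) := by
  have hkl : k ≠ l := fun h => hk (h ▸ hl)
  rw [cnt_insert hk l, cnt_erase hl k]
  rw [pow_add, pow_add]
  rcases hkl.lt_or_gt with h | h
  · rw [if_pos h, if_neg (asymm h)]
    ring
  · rw [if_neg (asymm h), if_pos h]
    ring
end Lemmas3
section Homotopy
variable {K : Type} [Field K] {n : ℕ}

/-- Evaluation of a Koszul `i`-chain on an arbitrary finset (zero if wrong cardinality). -/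
noncomputable def ev (M : GWM K n) (i : ℕ) (φ : KosLevel M n (i : ℤ))
    (A : Finset (Fin n)) : M.carrier :=
  if h : ((A.card : ℤ)) = (i : ℤ) then φ ⟨A, h⟩ else 0

/-- The contraction homotopy `σ` built from the `∂` operators. -/
noncomputable def sig (M : GWM K n) (i : ℕ) (φ : KosLevel M n (i : ℤ)) :
    KosLevel M n ((i : ℤ) + 1) :=
  fun U => ∑ l ∈ U.1, ((-1:ℤ) ^ cnt U.1 l) • (Wd K l • ev M i φ (U.1.erase l))

lemma homotopy (M : GWM K n) (i : ℕ) (φ : KosLevel M n (i : ℤ))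
    (hcyc : kosIsCycle (fun k : Fin n => Wx K k) (i : ℤ) φ)
    (T : {S : Finset (Fin n) // (S.card : ℤ) = (i : ℤ)}) :
    kosDiff (fun k : Fin n => Wx K k) ((i : ℤ) + 1) (i : ℤ) (sig M i φ) T
      = (weylEuler K n + (i : WeylAlgebra K n)) • φ T := by
  obtain ⟨S, hS⟩ := T
  have hScard : S.card = i := by exact_mod_cast hS
  have hφ : φ ⟨S, hS⟩ = ev M i φ S := by rw [ev, dif_pos hS]
  -- normal forms of the two double sums
  set F : Fin n → Fin n → M.carrier := fun k l =>
    ((-1:ℤ) ^ cnt S k * (-1:ℤ) ^ cnt (insert k S) l) •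
      ((Wx K k * Wd K l) • ev M i φ ((insert k S).erase l)) with hF
  set G : Fin n → Fin n → M.carrier := fun l k =>
    ((-1:ℤ) ^ cnt S l * (-1:ℤ) ^ cnt (S.erase l) k) •
      ((Wd K l * Wx K k) • ev M i φ (insert k (S.erase l))) with hG
  -- Step 1 : the LHS as a normalized double sum
  have step1 : kosDiff (fun k : Fin n => Wx K k) ((i : ℤ) + 1) (i : ℤ) (sig M i φ) ⟨S, hS⟩
      = ∑ k ∈ Sᶜ, ∑ l ∈ insert k S, F k l := by
    rw [kosDiff]
    refine Finset.sum_congr rfl fun k hk => ?_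
    have hk' : k ∉ S := Finset.mem_compl.mp hk
    have hins : (((insert k S).card : ℤ)) = (i : ℤ) + 1 := by
      rw [Finset.card_insert_of_notMem hk']
      push_cast [hScard]
      ring
    rw [dif_pos hins]
    show ((-1:ℤ) ^ cnt S k) • (Wx K k • sig M i φ ⟨insert k S, hins⟩) = _
    rw [sig]
    rw [Finset.smul_sum, Finset.smul_sum]
    refine Finset.sum_congr rfl fun l hl => ?_
    show ((-1:ℤ) ^ cnt S k) • (Wx K k • (((-1:ℤ) ^ cnt (insert k S) l) •
        (Wd K l • ev M i φ ((insert k S).erase l))))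
        = ((-1:ℤ) ^ cnt S k * (-1:ℤ) ^ cnt (insert k S) l) •
          ((Wx K k * Wd K l) • ev M i φ ((insert k S).erase l))
    rw [smul_comm (Wx K k), smul_smul, mul_smul (Wx K k)]
  -- Step 2 : the cycle condition as a normalized double sum
  have step2 : (0 : M.carrier) = ∑ l ∈ S, ∑ k ∈ (S.erase l)ᶜ, G l k := by
    symm
    refine Finset.sum_eq_zero fun l hl => ?_
    have h1 : 1 ≤ S.card := Finset.card_pos.mpr ⟨l, hl⟩
    have herase : (((S.erase l).card : ℤ)) = (i : ℤ) - 1 := by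
      rw [Finset.card_erase_of_mem hl]
      omega
    have hc := hcyc ⟨S.erase l, herase⟩
    have expand : ∑ k ∈ (S.erase l)ᶜ, G l k
        = ((-1:ℤ) ^ cnt S l) • (Wd K l •
            kosDiff (fun k : Fin n => Wx K k) (i : ℤ) ((i : ℤ) - 1) φ ⟨S.erase l, herase⟩) := by
      rw [kosDiff, Finset.smul_sum, Finset.smul_sum]
      refine Finset.sum_congr rfl fun k hk => ?_
      show ((-1:ℤ) ^ cnt S l * (-1:ℤ) ^ cnt (S.erase l) k) •
          ((Wd K l * Wx K k) • ev M i φ (insert k (S.erase l)))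
          = ((-1:ℤ) ^ cnt S l) • (Wd K l • (((-1:ℤ) ^ cnt (S.erase l) k) •
            (Wx K k • ev M i φ (insert k (S.erase l)))))
      rw [smul_comm (Wd K l), smul_smul, mul_smul (Wd K l)]
    rw [expand, hc, smul_zero, smul_zero]
  -- split off the diagonal terms
  have splitL : ∑ k ∈ Sᶜ, ∑ l ∈ insert k S, F k l
      = (∑ k ∈ Sᶜ, F k k) + ∑ k ∈ Sᶜ, ∑ l ∈ S, F k l := by
    rw [← Finset.sum_add_distrib]
    exact Finset.sum_congr rfl fun k hk => Finset.sum_insert (Finset.mem_compl.mp hk)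
  have splitC : ∑ l ∈ S, ∑ k ∈ (S.erase l)ᶜ, G l k
      = (∑ l ∈ S, G l l) + ∑ l ∈ S, ∑ k ∈ Sᶜ, G l k := by
    rw [← Finset.sum_add_distrib]
    refine Finset.sum_congr rfl fun l hl => ?_
    rw [Finset.compl_erase, Finset.sum_insert (by simp [hl])]
  -- the off-diagonal terms cancel
  have cancel : ((∑ k ∈ Sᶜ, ∑ l ∈ S, F k l) + ∑ l ∈ S, ∑ k ∈ Sᶜ, G l k) = 0 := by
    rw [Finset.sum_comm (s := S) (t := Sᶜ), ← Finset.sum_add_distrib]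
    refine Finset.sum_eq_zero fun k hk => ?_
    rw [← Finset.sum_add_distrib]
    refine Finset.sum_eq_zero fun l hl => ?_
    have hk' : k ∉ S := Finset.mem_compl.mp hk
    have hkl : k ≠ l := fun h => hk' (h ▸ hl)
    have hset : (insert k S).erase l = insert k (S.erase l) :=
      Finset.erase_insert_of_ne hkl
    show ((-1:ℤ) ^ cnt S k * (-1:ℤ) ^ cnt (insert k S) l) •
        ((Wx K k * Wd K l) • ev M i φ ((insert k S).erase l))
        + ((-1:ℤ) ^ cnt S l * (-1:ℤ) ^ cnt (S.erase l) k) •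
        ((Wd K l * Wx K k) • ev M i φ (insert k (S.erase l))) = 0
    rw [hset, wd_wx, if_neg (Ne.symm hkl), add_zero, sign_cancel hk' hl,
      neg_smul, neg_add_cancel]
  -- diagonal terms
  have hA : ∀ k ∈ Sᶜ, F k k = (Wx K k * Wd K k) • ev M i φ S := by
    intro k hk
    have hk' : k ∉ S := Finset.mem_compl.mp hk
    show ((-1:ℤ) ^ cnt S k * (-1:ℤ) ^ cnt (insert k S) k) •
        ((Wx K k * Wd K k) • ev M i φ ((insert k S).erase k)) = _
    rw [cnt_insert_self hk', ← pow_add, Even.neg_one_pow ⟨cnt S k, rfl⟩, one_smul,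
      Finset.erase_insert hk']
  have hC : ∀ l ∈ S, G l l = (Wx K l * Wd K l) • ev M i φ S + ev M i φ S := by
    intro l hl
    show ((-1:ℤ) ^ cnt S l * (-1:ℤ) ^ cnt (S.erase l) l) •
        ((Wd K l * Wx K l) • ev M i φ (insert l (S.erase l))) = _
    rw [cnt_erase_self, ← pow_add, Even.neg_one_pow ⟨cnt S l, rfl⟩, one_smul,
      Finset.insert_erase hl, wd_wx, if_pos rfl, add_smul, one_smul]
  -- put everything together
  have hB_eq : (∑ k ∈ Sᶜ, ∑ l ∈ S, F k l) = ∑ l ∈ S, G l l := by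
    rw [splitC] at step2
    have h1 : (∑ k ∈ Sᶜ, ∑ l ∈ S, F k l) = -∑ l ∈ S, ∑ k ∈ Sᶜ, G l k :=
      eq_neg_of_add_eq_zero_left cancel
    have h2 : (∑ l ∈ S, G l l) = -∑ l ∈ S, ∑ k ∈ Sᶜ, G l k :=
      eq_neg_of_add_eq_zero_left step2.symm
    rw [h1, h2]
  rw [step1, splitL, hB_eq, Finset.sum_congr rfl hA, Finset.sum_congr rfl hC,
    Finset.sum_add_distrib, Finset.sum_const, hφ, hScard]
  rw [add_smul, weylEuler, Finset.sum_smul, Nat.cast_smul_eq_nsmul,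
    ← Finset.sum_add_sum_compl S (fun k => (Wx K k * Wd K k) • ev M i φ S)]
  abel
end Homotopy

/-- Let `M` be a generalized Eulerian `A_n(K)`-module.  Then for every
`i ≥ 0` the Koszul homology `H_i(X_1, …, X_n; M)` is concentrated in degree `0`: every
homogeneous Koszul `i`-cycle of internal degree `j ≠ 0` is a boundary. -/
theorem koszul_X_homology_concentrated_in_degree_zero
    (K : Type) [Field K] [CharZero K] (n : ℕ)
    (M : GWM K n) (hM : M.IsGenEulerian) (i : ℕ) (j : ℤ) (hj : j ≠ 0)
    (φ : KosLevel M n (i : ℤ))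
    (hcyc : kosIsCycle (fun k : Fin n => Wx K k) (i : ℤ) φ)
    (hhom : kosHomog (fun _ : Fin n => (1 : ℤ)) (i : ℤ) j φ) :
    kosIsBoundary (fun k : Fin n => Wx K k) (i : ℤ) φ := by
  classical
  set q : K := ((j : ℤ) : K) with hqdef
  have hq : q ≠ 0 := Int.cast_ne_zero.mpr hj
  set c : K := (((j - (i : ℤ)) : ℤ) : K) with hcdef
  -- every component of `φ` lives in degree `j - i`
  have hdeg : ∀ T : {S : Finset (Fin n) // ((S.card : ℤ)) = (i : ℤ)},
      φ T ∈ M.deg (j - (i : ℤ)) := by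
    intro T
    have h := hhom T
    rwa [Finset.sum_const, nsmul_eq_mul, mul_one, T.2] at h
  choose aa haa1 haa2 using fun T => hM (j - (i : ℤ)) (φ T) (hdeg T)
  set a : ℕ := Finset.univ.sup aa with ha
  have hnil : ∀ T, ((weylEuler K n - algebraMap K (WeylAlgebra K n) c) ^ a) • (φ T) = 0 := by
    intro T
    have hle : aa T ≤ a := Finset.le_sup (Finset.mem_univ T)
    rw [hcdef, map_intCast, show a = (a - aa T) + aa T from (Nat.sub_add_cancel hle).symm,
      pow_add, mul_smul, haa2 T, smul_zero]
  refine ⟨fun U => wpoly' K n q c a • sig M i φ U, ?_⟩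
  funext T
  have key : kosDiff (fun k : Fin n => Wx K k) ((i : ℤ) + 1) (i : ℤ)
        (fun U => wpoly' K n q c a • sig M i φ U) T
      = wpoly K n q c a •
        kosDiff (fun k : Fin n => Wx K k) ((i : ℤ) + 1) (i : ℤ) (sig M i φ) T := by
    rw [kosDiff, kosDiff, Finset.smul_sum]
    refine Finset.sum_congr rfl fun k hk => ?_
    have hdite : (if h : (((insert k T.1).card : ℤ)) = (i : ℤ) + 1 then
          (fun U => wpoly' K n q c a • sig M i φ U) ⟨insert k T.1, h⟩ else 0)
        = wpoly' K n q c a • (if h : (((insert k T.1).card : ℤ)) = (i : ℤ) + 1 then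
          sig M i φ ⟨insert k T.1, h⟩ else 0) := by
      split
      · rfl
      · rw [smul_zero]
    rw [hdite, smul_comm (wpoly K n q c a)]
    congr 1
    rw [← mul_smul, ← mul_smul, ← wpoly_mul_wx]
  rw [key, homotopy M i φ hcyc T]
  have hEi : weylEuler K n + (i : WeylAlgebra K n)
      = weylEuler K n - algebraMap K (WeylAlgebra K n) c + algebraMap K (WeylAlgebra K n) q := by
    rw [hcdef, hqdef, map_intCast, map_intCast]
    push_cast
    abel
  rw [hEi, ← mul_smul, wpoly_mul q c hq a, sub_smul, one_smul, mul_smul, hnil T,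
    smul_zero, sub_zero]
end

section
/- Let M be a generalized Eulerian A_n(K)-module. Then for every i with 2 ≤ i ≤ n and every j ≥ 0, the Koszul homology module H_j(X_i, X_{i+1}, …, X_n; M) is a generalized Eulerian A_{i−1}(K)-module. -/
/-! ### Auxiliary lemmas -/

section WeylRelations

variable (K : Type) [Field K] (n : ℕ)

private lemma wx_mul_wx (a b : Fin n) : Wx K a * Wx K b = Wx K b * Wx K a := by
  unfold Wx
  rw [← map_mul, ← map_mul]
  exact RingQuot.mkAlgHom_rel K (WeylRel.xx a b)

private lemma wd_mul_wd (a b : Fin n) : Wd K a * Wd K b = Wd K b * Wd K a := by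
  unfold Wd
  rw [← map_mul, ← map_mul]
  exact RingQuot.mkAlgHom_rel K (WeylRel.dd a b)

private lemma wd_mul_wx (a b : Fin n) :
    Wd K a * Wx K b = Wx K b * Wd K a + (if a = b then 1 else 0) := by
  unfold Wx Wd
  rw [← map_mul, RingQuot.mkAlgHom_rel K (WeylRel.dx a b), map_add, map_mul]
  congr 1
  split <;> simp

private lemma wd_mul_wx_ne {a b : Fin n} (h : a ≠ b) :
    Wd K a * Wx K b = Wx K b * Wd K a := by
  rw [wd_mul_wx, if_neg h, add_zero]

private lemma we_comm (l m : Fin n) :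
    Commute (Wx K l * Wd K l) (Wx K m * Wd K m) := by
  rcases eq_or_ne l m with rfl | h
  · exact Commute.refl _
  · have cxx : Commute (Wx K l) (Wx K m) := wx_mul_wx K n l m
    have cdd : Commute (Wd K l) (Wd K m) := wd_mul_wd K n l m
    have cdx : Commute (Wd K l) (Wx K m) := wd_mul_wx_ne K n h
    have cxd : Commute (Wx K l) (Wd K m) := (wd_mul_wx_ne K n h.symm).symm
    exact (cxx.mul_right cxd).mul_left (cdx.mul_right cdd)

private lemma we_mul_wx (l k : Fin n) :
    (Wx K l * Wd K l) * Wx K k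
      = Wx K k * (Wx K l * Wd K l) + (if l = k then Wx K k else 0) := by
  rcases eq_or_ne l k with rfl | h
  · rw [if_pos rfl, mul_assoc, wd_mul_wx, if_pos rfl, mul_add, mul_one, ← mul_assoc]
  · rw [if_neg h, add_zero, mul_assoc, wd_mul_wx_ne K n h, ← mul_assoc, wx_mul_wx K n l k,
      mul_assoc]

private lemma sum_we_mul_wx (F : Finset (Fin n)) (k : Fin n) (hk : k ∈ F) :
    (∑ l ∈ F, Wx K l * Wd K l) * Wx K k
      = Wx K k * ((∑ l ∈ F, Wx K l * Wd K l) + 1) := by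
  rw [Finset.sum_mul]
  simp only [we_mul_wx]
  rw [Finset.sum_add_distrib, ← Finset.mul_sum, Finset.sum_ite_eq' F k, if_pos hk,
    mul_add, mul_one]

end WeylRelations


section KoszulAux

variable {K : Type} [Field K] {n : ℕ} {M : GWM K n} {c : ℕ}

private lemma smul4 (s₁ s₂ : ℤ) (w₁ w₂ : WeylAlgebra K n) (x : M.carrier) :
    s₁ • (w₁ • (s₂ • (w₂ • x))) = (s₁ * s₂) • ((w₁ * w₂) • x) := by
  rw [← Int.cast_smul_eq_zsmul (WeylAlgebra K n) s₂, ← Int.cast_smul_eq_zsmul (WeylAlgebra K n) s₁,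
    ← Int.cast_smul_eq_zsmul (WeylAlgebra K n) (s₁ * s₂), smul_smul, smul_smul, smul_smul,
    smul_smul]
  congr 1
  push_cast
  rw [mul_assoc ((s₁ : WeylAlgebra K n)) w₁, ← (Int.cast_commute s₂ w₁).eq, ← mul_assoc,
    mul_assoc ((s₁ : WeylAlgebra K n) * (s₂ : WeylAlgebra K n))]

private lemma sq_smul (e : ℕ) (w₁ w₂ : WeylAlgebra K n) (x : M.carrier) :
    ((-1 : ℤ) ^ e) • (w₁ • (((-1 : ℤ) ^ e) • (w₂ • x))) = (w₁ * w₂) • x := by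
  rw [smul4]
  have : ((-1 : ℤ) ^ e) * ((-1 : ℤ) ^ e) = 1 := by
    rw [← pow_add]
    exact Even.neg_one_pow ⟨e, by ring⟩
  rw [this, one_smul]

private lemma kosDiff_zero (u : Fin c → WeylAlgebra K n) (a b : ℤ)
    (T : {S : Finset (Fin c) // (S.card : ℤ) = b}) :
    kosDiff u a b (0 : KosLevel M c a) T = 0 := by
  unfold kosDiff
  refine Finset.sum_eq_zero fun k _ => ?_
  have : (if h : (((insert k T.1).card : ℤ)) = a
      then (0 : KosLevel M c a) ⟨insert k T.1, h⟩ else 0) = (0 : M.carrier) := by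
    split <;> rfl
  rw [this, smul_zero, smul_zero]

private lemma kosDiff_sub (u : Fin c → WeylAlgebra K n) (a b : ℤ)
    (ψ₁ ψ₂ : KosLevel M c a) (T : {S : Finset (Fin c) // (S.card : ℤ) = b}) :
    kosDiff u a b (ψ₁ - ψ₂) T = kosDiff u a b ψ₁ T - kosDiff u a b ψ₂ T := by
  unfold kosDiff
  rw [← Finset.sum_sub_distrib]
  refine Finset.sum_congr rfl fun k _ => ?_
  have : (if h : (((insert k T.1).card : ℤ)) = a then (ψ₁ - ψ₂) ⟨insert k T.1, h⟩ else 0)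
      = (if h : (((insert k T.1).card : ℤ)) = a then ψ₁ ⟨insert k T.1, h⟩ else 0)
        - (if h : (((insert k T.1).card : ℤ)) = a then ψ₂ ⟨insert k T.1, h⟩ else 0) := by
    split
    · rfl
    · rw [sub_zero]
  rw [this, smul_sub, smul_sub]

private lemma kosDiff_smul (u : Fin c → WeylAlgebra K n) {w v : WeylAlgebra K n}
    (h : ∀ k, w * u k = u k * v) (a b : ℤ) (ψ : KosLevel M c a)
    (T : {S : Finset (Fin c) // (S.card : ℤ) = b}) :
    kosDiff u a b (v • ψ) T = w • kosDiff u a b ψ T := by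
  unfold kosDiff
  rw [Finset.smul_sum]
  refine Finset.sum_congr rfl fun k _ => ?_
  have hd : (if h' : (((insert k T.1).card : ℤ)) = a then (v • ψ) ⟨insert k T.1, h'⟩ else 0)
      = v • (if h' : (((insert k T.1).card : ℤ)) = a then ψ ⟨insert k T.1, h'⟩ else 0) := by
    split
    · rfl
    · rw [smul_zero]
  rw [hd]
  set x := (if h' : (((insert k T.1).card : ℤ)) = a then ψ ⟨insert k T.1, h'⟩ else 0) with hx
  rw [← Int.cast_smul_eq_zsmul (WeylAlgebra K n), ← Int.cast_smul_eq_zsmul (WeylAlgebra K n),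
    smul_smul, smul_smul, smul_smul, smul_smul]
  congr 1
  rw [mul_assoc, ← h k, ← mul_assoc, (Int.cast_commute ((-1 : ℤ) ^ ((Finset.filter (fun x => x < k) T.1).card)) w).eq]

/-- The Koszul contracting homotopy built from a family `v` of operators. -/
private noncomputable def kosH (v : Fin c → WeylAlgebra K n) (a b : ℤ)
    (φ : KosLevel M c a) (S : {S : Finset (Fin c) // (S.card : ℤ) = b}) : M.carrier :=
  ∑ m ∈ S.1, ((-1 : ℤ) ^ (((S.1.erase m).filter (fun x => x < m)).card)) •
    (v m • (if h : (((S.1.erase m).card : ℤ)) = a then φ ⟨S.1.erase m, h⟩ else 0))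

end KoszulAux


section Homotopy

variable {K : Type} [Field K] {n : ℕ} {M : GWM K n} {c : ℕ}

private lemma dite_set_congr (jz : ℤ) (φ : KosLevel M c jz) {s₁ s₂ : Finset (Fin c)}
    (h : s₁ = s₂) :
    (if h' : ((s₁.card : ℤ)) = jz then φ ⟨s₁, h'⟩ else 0)
      = (if h' : ((s₂.card : ℤ)) = jz then φ ⟨s₂, h'⟩ else 0) := by
  subst h; rfl

private lemma sign_cancel_s13 {t : Finset (Fin c)} {k m : Fin c} (hk : k ∉ t) (hm : m ∈ t) :
    ((-1 : ℤ) ^ ((t.filter (fun x => x < k)).card))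
        * ((-1 : ℤ) ^ ((((insert k t).erase m).filter (fun x => x < m)).card))
      = -(((-1 : ℤ) ^ (((t.erase m).filter (fun x => x < m)).card))
        * ((-1 : ℤ) ^ (((t.erase m).filter (fun x => x < k)).card))) := by
  have hkm : k ≠ m := fun h => hk (h ▸ hm)
  have e2 : (((insert k t).erase m).filter (fun x => x < m)).card
      = ((t.erase m).filter (fun x => x < m)).card + (if k < m then 1 else 0) := by
    rw [Finset.erase_insert_of_ne hkm, Finset.filter_insert]
    split
    · rw [Finset.card_insert_of_notMem
        (by simp [Finset.mem_filter, Finset.mem_erase, hk])]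
    · rw [add_zero]
  have e1 : ((t.filter (fun x => x < k)).card)
      = ((t.erase m).filter (fun x => x < k)).card + (if m < k then 1 else 0) := by
    conv_lhs => rw [← Finset.insert_erase hm]
    rw [Finset.filter_insert]
    split
    · rw [Finset.card_insert_of_notMem (by simp [Finset.mem_filter])]
    · rw [add_zero]
  rw [e1, e2]
  rcases lt_or_gt_of_ne hkm with h | h
  · rw [if_pos h, if_neg (asymm h)]
    ring
  · rw [if_neg (asymm h), if_pos h]
    ring

/-- The value of `φ` on `insert k (t.erase m)` (or `0` if the cardinality does not fit). -/
private noncomputable def PhiAux (jz : ℤ) (φ : KosLevel M c jz) (t : Finset (Fin c))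
    (k m : Fin c) : M.carrier :=
  if h : (((insert k (t.erase m)).card : ℤ)) = jz then φ ⟨insert k (t.erase m), h⟩ else 0

/-- **Cartan's magic formula** for the Koszul complex: `d ∘ h + h ∘ d = θ + level`. -/
private lemma homotopy_s13 (u v : Fin c → WeylAlgebra K n)
    (h1 : ∀ k l, k ≠ l → v k * u l = u l * v k)
    (h2 : ∀ k, v k * u k = u k * v k + 1)
    (jz : ℤ) (φ : KosLevel M c jz) (T : {S : Finset (Fin c) // (S.card : ℤ) = jz}) :
    kosDiff u (jz + 1) jz (kosH v jz (jz + 1) φ) T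
      + kosH v (jz - 1) jz (fun T' => kosDiff u jz (jz - 1) φ T') T
    = ((∑ k : Fin c, u k * v k) • φ T) + T.1.card • φ T := by
  obtain ⟨t, ht⟩ := T
  have hins : ∀ k ∉ t, (((insert k t).card : ℤ)) = jz + 1 := by
    intro k hk
    rw [Finset.card_insert_of_notMem hk]
    push_cast
    omega
  have hdh : kosDiff u (jz + 1) jz (kosH v jz (jz + 1) φ) ⟨t, ht⟩
      = ∑ k ∈ tᶜ, ((u k * v k) • φ ⟨t, ht⟩
          + ∑ m ∈ t, ((((-1 : ℤ) ^ ((t.filter (fun x => x < k)).card))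
              * ((-1 : ℤ) ^ ((((insert k t).erase m).filter (fun x => x < m)).card)))
            • ((u k * v m) • PhiAux jz φ t k m))) := by
    unfold kosDiff
    refine Finset.sum_congr rfl fun k hk => ?_
    rw [Finset.mem_compl] at hk
    rw [dif_pos (hins k hk)]
    unfold kosH
    rw [Finset.sum_insert hk, Finset.erase_insert hk, dif_pos ht, smul_add, smul_add,
      sq_smul]
    congr 1
    rw [Finset.smul_sum, Finset.smul_sum]
    refine Finset.sum_congr rfl fun m hm => ?_
    have hkm : k ≠ m := fun h => hk (h ▸ hm)
    rw [smul4]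
    congr 2
    unfold PhiAux
    exact dite_set_congr jz φ (Finset.erase_insert_of_ne hkm)
  have herase : ∀ m ∈ t, (((t.erase m).card : ℤ)) = jz - 1 := by
    intro m hm
    rw [Finset.card_erase_of_mem hm]
    have h1 : 1 ≤ t.card := Finset.card_pos.mpr ⟨m, hm⟩
    push_cast [Nat.cast_sub h1]
    omega
  have hhd : kosH v (jz - 1) jz (fun T' => kosDiff u jz (jz - 1) φ T') ⟨t, ht⟩
      = ∑ m ∈ t, (((u m * v m) • φ ⟨t, ht⟩ + φ ⟨t, ht⟩)
          + ∑ k ∈ tᶜ, ((((-1 : ℤ) ^ (((t.erase m).filter (fun x => x < m)).card))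
              * ((-1 : ℤ) ^ (((t.erase m).filter (fun x => x < k)).card)))
            • ((u k * v m) • PhiAux jz φ t k m))) := by
    unfold kosH
    refine Finset.sum_congr rfl fun m hm => ?_
    rw [dif_pos (herase m hm)]
    show _ • (v m • kosDiff u jz (jz - 1) φ ⟨t.erase m, herase m hm⟩) = _
    unfold kosDiff
    have hmc : m ∉ (t.erase m)ᶜᶜ := by
      rw [compl_compl]
      exact Finset.notMem_erase m t
    have hcompl : (t.erase m)ᶜ = insert m tᶜ := Finset.compl_erase
    rw [hcompl, Finset.sum_insert (by simp [hm])]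
    have hmm : (if h : (((insert m (t.erase m)).card : ℤ)) = jz
        then φ ⟨insert m (t.erase m), h⟩ else 0) = φ ⟨t, ht⟩ := by
      rw [dite_set_congr jz φ (Finset.insert_erase hm), dif_pos ht]
    rw [hmm, smul_add, smul_add, sq_smul, h2 m, add_smul, one_smul]
    congr 1
    rw [Finset.smul_sum, Finset.smul_sum]
    refine Finset.sum_congr rfl fun k hk => ?_
    rw [Finset.mem_compl] at hk
    have hkm : m ≠ k := fun h => hk (h ▸ hm)
    rw [smul4]
    congr 1
    rw [h1 m k hkm]
    rfl
  rw [hdh, hhd, Finset.sum_add_distrib, Finset.sum_add_distrib, Finset.sum_add_distrib]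
  have hcancel : ∑ k ∈ tᶜ, ∑ m ∈ t,
        ((((-1 : ℤ) ^ ((t.filter (fun x => x < k)).card))
            * ((-1 : ℤ) ^ ((((insert k t).erase m).filter (fun x => x < m)).card)))
          • ((u k * v m) • PhiAux jz φ t k m))
      + ∑ m ∈ t, ∑ k ∈ tᶜ,
        ((((-1 : ℤ) ^ (((t.erase m).filter (fun x => x < m)).card))
            * ((-1 : ℤ) ^ (((t.erase m).filter (fun x => x < k)).card)))
          • ((u k * v m) • PhiAux jz φ t k m)) = 0 := by
    rw [Finset.sum_comm (s := t) (t := tᶜ), ← Finset.sum_add_distrib]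
    refine Finset.sum_eq_zero fun k hk => ?_
    rw [← Finset.sum_add_distrib]
    refine Finset.sum_eq_zero fun m hm => ?_
    rw [Finset.mem_compl] at hk
    rw [sign_cancel_s13 hk hm, neg_smul, neg_add_cancel]
  have hdiag : ∑ k ∈ tᶜ, (u k * v k) • φ ⟨t, ht⟩ + ∑ m ∈ t, ((u m * v m) • φ ⟨t, ht⟩ + φ ⟨t, ht⟩)
      = ((∑ k : Fin c, u k * v k) • φ ⟨t, ht⟩) + t.card • φ ⟨t, ht⟩ := by
    rw [Finset.sum_add_distrib, Finset.sum_const, ← add_assoc, Finset.sum_compl_add_sum,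
      ← Finset.sum_smul]
  rw [← hdiag]
  rw [add_add_add_comm]
  rw [hcancel, add_zero]
  rw [Finset.sum_add_distrib]

end Homotopy


section Master

variable {K : Type} [Field K] {n : ℕ} {M : GWM K n} {c : ℕ}

private lemma pow_shift {u : Fin c → WeylAlgebra K n} {E : WeylAlgebra K n}
    (hE : ∀ k, E * u k = u k * (E + 1)) (t : ℕ) (k : Fin c) :
    E ^ t * u k = u k * (E + 1) ^ t := by
  induction t with
  | zero => rw [pow_zero, pow_zero, one_mul, mul_one]
  | succ t ih =>
      rw [pow_succ, pow_succ, mul_assoc, hE k, ← mul_assoc, ih, mul_assoc]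

private lemma pow_smul_kill {x : WeylAlgebra K n} {m : M.carrier} {a b : ℕ} (hab : a ≤ b)
    (h : (x ^ a) • m = 0) : (x ^ b) • m = 0 := by
  obtain ⟨e, rfl⟩ := Nat.exists_eq_add_of_le hab
  rw [add_comm, pow_add, mul_smul, h, smul_zero]

private lemma master (u v : Fin c → WeylAlgebra K n) (E Θ : WeylAlgebra K n)
    (h1 : ∀ k l, k ≠ l → v k * u l = u l * v k)
    (h2 : ∀ k, v k * u k = u k * v k + 1)
    (hEu : ∀ k, E * u k = u k * (E + 1))
    (hΘu : ∀ k, Θ * u k = u k * (Θ + 1))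
    (hEΘ : Commute E Θ)
    (jn : ℕ) (φ : KosLevel M c (jn : ℤ))
    (hcyc : kosIsCycle u (jn : ℤ) φ)
    (hΘ : Θ = (∑ k : Fin c, u k * v k) + (jn : WeylAlgebra K n))
    (a : ℕ) (hkill : ∀ S, (E ^ a) • φ S = 0) :
    kosIsBoundary u (jn : ℤ) (((E - Θ) ^ a) • φ) := by
  have hEΘu : ∀ k, (E - Θ) * u k = u k * (E - Θ) := by
    intro k
    rw [sub_mul, hEu k, hΘu k, ← mul_sub]
    congr 1
    abel
  -- the Koszul differential of the contracting homotopy of a cycle is `Θ • φ`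
  have hdh : ∀ T, kosDiff u ((jn : ℤ) + 1) (jn : ℤ) (kosH v (jn : ℤ) ((jn : ℤ) + 1) φ) T
      = Θ • φ T := by
    intro T
    have hzero : kosH v ((jn : ℤ) - 1) (jn : ℤ)
        (fun T' => kosDiff u (jn : ℤ) ((jn : ℤ) - 1) φ T') T = 0 := by
      unfold kosH
      refine Finset.sum_eq_zero fun m _ => ?_
      have : (if h : (((T.1.erase m).card : ℤ)) = (jn : ℤ) - 1
          then kosDiff u (jn : ℤ) ((jn : ℤ) - 1) φ ⟨T.1.erase m, h⟩ else 0) = 0 := by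
        split
        · exact hcyc _
        · rfl
      rw [this, smul_zero, smul_zero]
    have hcard : T.1.card = jn := by exact_mod_cast T.2
    have := homotopy_s13 u v h1 h2 (jn : ℤ) φ T
    rw [hzero, add_zero, hcard] at this
    rw [this, hΘ, add_smul, ← Nat.cast_smul_eq_nsmul (WeylAlgebra K n)]
  -- main induction
  have key : ∀ t : ℕ, ∃ ψ : KosLevel M c ((jn : ℤ) + 1),
      (fun T => kosDiff u ((jn : ℤ) + 1) (jn : ℤ) ψ T)
        = ((E - Θ) ^ t) • φ - (E ^ t) • φ := by
    intro t
    induction t with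
    | zero =>
        refine ⟨0, funext fun T => ?_⟩
        rw [kosDiff_zero, pow_zero, pow_zero, one_smul, sub_self]
        rfl
    | succ t ih =>
        obtain ⟨ψ, hψ⟩ := ih
        refine ⟨(E - Θ) • ψ - ((E + 1) ^ t) • (kosH v (jn : ℤ) ((jn : ℤ) + 1) φ),
          funext fun T => ?_⟩
        rw [kosDiff_sub, kosDiff_smul u hEΘu, kosDiff_smul u (pow_shift hEu t), hdh T]
        have hψT := congrFun hψ T
        rw [hψT]
        have hCj : Θ * E ^ t = E ^ t * Θ := (hEΘ.symm.pow_right t).eq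
        have hkey : (E - Θ) * E ^ t + E ^ t * Θ = E ^ (t + 1) := by
          rw [sub_mul, ← hCj, ← pow_succ']
          abel
        show (E - Θ) • ((E - Θ) ^ t • φ T - E ^ t • φ T) - E ^ t • Θ • φ T
            = ((E - Θ) ^ (t + 1) • φ - E ^ (t + 1) • φ) T
        rw [Pi.sub_apply, Pi.smul_apply, Pi.smul_apply, smul_sub, smul_smul, smul_smul,
          smul_smul, ← pow_succ', sub_sub, ← add_smul, hkey]
  obtain ⟨ψ, hψ⟩ := key a
  refine ⟨ψ, ?_⟩
  rw [hψ]
  have : (E ^ a) • φ = (0 : KosLevel M c (jn : ℤ)) := funext fun S => hkill S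
  rw [this, sub_zero]

end Master

/-- Let `M` be a generalized Eulerian `A_n(K)`-module and `2 ≤ i ≤ n`.
Then for every `j ≥ 0` the Koszul homology `H_j(X_i, …, X_n; M)` is a generalized Eulerian
`A_{i-1}(K)`-module: for every homogeneous cycle of internal degree `d`, some power of
`ℰ_{i-1} - d` maps it into the boundaries. -/
theorem koszul_X_homology_is_generalizedEulerian
    (K : Type) [Field K] [CharZero K] (n i : ℕ) (h2 : 2 ≤ i) (hin : i ≤ n)
    (M : GWM K n) (hM : M.IsGenEulerian) (j : ℕ) (d : ℤ)
    (φ : KosLevel M (n - i + 1) (j : ℤ))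
    (hcyc : kosIsCycle
      (fun k : Fin (n - i + 1) => Wx K ⟨i - 1 + (k : ℕ), by have := k.isLt; omega⟩)
      (j : ℤ) φ)
    (hhom : kosHomog (fun _ : Fin (n - i + 1) => (1 : ℤ)) (j : ℤ) d φ) :
    ∃ a : ℕ, 1 ≤ a ∧ kosIsBoundary
      (fun k : Fin (n - i + 1) => Wx K ⟨i - 1 + (k : ℕ), by have := k.isLt; omega⟩)
      (j : ℤ)
      (((weylEulerUpTo K n (i - 1) - (d : WeylAlgebra K n)) ^ a) • φ) := by
  classical
  let u : Fin (n - i + 1) → WeylAlgebra K n :=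
    fun k => Wx K ⟨i - 1 + (k : ℕ), by have := k.isLt; omega⟩
  let v : Fin (n - i + 1) → WeylAlgebra K n :=
    fun k => Wd K ⟨i - 1 + (k : ℕ), by have := k.isLt; omega⟩
  set F : Finset (Fin n) := Finset.univ.filter (fun l : Fin n => ¬ ((l : ℕ) < i - 1)) with hF
  set θF : WeylAlgebra K n := ∑ l ∈ F, Wx K l * Wd K l with hθF
  set E : WeylAlgebra K n := weylEuler K n - ((d - (j : ℤ) : ℤ) : WeylAlgebra K n) with hE
  set Θ : WeylAlgebra K n := θF + ((j : ℕ) : WeylAlgebra K n) with hΘdef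
  -- basic commutation facts
  have h1 : ∀ k l : Fin (n - i + 1), k ≠ l → v k * u l = u l * v k := by
    intro k l hkl
    apply wd_mul_wx_ne
    intro h
    apply hkl
    have := congrArg Fin.val h
    simp only at this
    exact Fin.ext (by omega)
  have h2 : ∀ k : Fin (n - i + 1), v k * u k = u k * v k + 1 := by
    intro k
    rw [wd_mul_wx, if_pos rfl]
  have hEu : ∀ k : Fin (n - i + 1), E * u k = u k * (E + 1) := by
    intro k
    have he : weylEuler K n * u k = u k * (weylEuler K n + 1) := by
      unfold weylEuler
      exact sum_we_mul_wx K n Finset.univ _ (Finset.mem_univ _)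
    rw [hE, sub_mul, he, (Int.cast_commute (d - (j : ℤ)) (u k)).eq, ← mul_sub]
    congr 1
    abel
  have hθu : ∀ k : Fin (n - i + 1), θF * u k = u k * (θF + 1) := by
    intro k
    refine sum_we_mul_wx K n F _ ?_
    rw [hF, Finset.mem_filter]
    refine ⟨Finset.mem_univ _, ?_⟩
    simp only
    omega
  have hΘu : ∀ k : Fin (n - i + 1), Θ * u k = u k * (Θ + 1) := by
    intro k
    rw [hΘdef, add_mul, hθu k, (Nat.cast_commute j (u k)).eq, ← mul_add]
    congr 1
    abel
  have hEΘ : Commute E Θ := by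
    have hc1 : Commute (weylEuler K n) θF := by
      unfold weylEuler
      rw [hθF]
      exact Commute.sum_left _ _ _ fun l _ =>
        Commute.sum_right _ _ _ fun m _ => we_comm K n l m
    have hc2 : Commute (weylEuler K n) Θ := hc1.add_right (Nat.commute_cast _ _)
    have hc3 : Commute (((d - (j : ℤ) : ℤ) : WeylAlgebra K n)) Θ := Int.cast_commute _ _
    exact hc2.sub_left hc3
  -- identification of Θ with the Koszul Euler operator
  have hsum : (∑ k : Fin (n - i + 1), u k * v k) = θF := by
    refine Finset.sum_nbij' (fun k => (⟨i - 1 + (k : ℕ), by have := k.isLt; omega⟩ : Fin n))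
      (fun l => (⟨(l : ℕ) - (i - 1), by have := l.isLt; omega⟩ : Fin (n - i + 1)))
      (fun k _ => ?_) (fun l _ => Finset.mem_univ _) (fun k _ => ?_) (fun l hl => ?_)
      (fun k _ => rfl)
    · rw [hF, Finset.mem_filter]
      exact ⟨Finset.mem_univ _, by simp only; omega⟩
    · exact Fin.ext (by simp only; omega)
    · rw [hF, Finset.mem_filter] at hl
      have := hl.2
      exact Fin.ext (by simp only; omega)
  have hΘ : Θ = (∑ k : Fin (n - i + 1), u k * v k) + ((j : ℕ) : WeylAlgebra K n) := by
    rw [hsum, hΘdef]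
  -- homogeneity and the Eulerian property give a uniform killing exponent
  have hphi : ∀ S : {S : Finset (Fin (n - i + 1)) // (S.card : ℤ) = (j : ℤ)},
      φ S ∈ M.deg (d - (j : ℤ)) := by
    intro S
    have h0 := hhom S
    have h1' : (d - ∑ _k ∈ S.1, (1 : ℤ)) = d - (j : ℤ) := by
      rw [Finset.sum_const, nsmul_eq_mul, mul_one, S.2]
    rwa [h1'] at h0
  choose a' ha' using fun S => hM (d - (j : ℤ)) (φ S) (hphi S)
  set A : ℕ := Finset.univ.sup a' + 1 with hA
  have hA1 : 1 ≤ A := Nat.le_add_left 1 _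
  have hkill : ∀ S, (E ^ A) • φ S = 0 := by
    intro S
    refine pow_smul_kill ?_ (ha' S).2
    exact (Finset.le_sup (Finset.mem_univ S)).trans (Nat.le_succ _)
  -- identification of the sub-Euler operator
  have hEq : weylEulerUpTo K n (i - 1) - (d : WeylAlgebra K n) = E - Θ := by
    have hsplit : weylEuler K n = weylEulerUpTo K n (i - 1) + θF := by
      unfold weylEuler weylEulerUpTo
      rw [hθF, hF,
        ← Finset.sum_filter_add_sum_filter_not Finset.univ (fun l : Fin n => (l : ℕ) < i - 1)
          (fun l => Wx K l * Wd K l)]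
    rw [hE, hΘdef, hsplit]
    push_cast
    abel
  refine ⟨A, hA1, ?_⟩
  rw [hEq]
  exact master u v E Θ h1 h2 hEu hΘu hEΘ j φ hcyc hΘ A hkill
end

section
/- Let M be a generalized Eulerian A_1(K)-module. Then H_0(X_1; M) = M/X_1M and H_1(X_1; M) (the kernel of multiplication by X_1 on M(−1)) are graded K-vector spaces concentrated in degree 0. -/
section Aux

lemma weyl_dx (K : Type) [Field K] :
    Wd K (0 : Fin 1) * Wx K (0 : Fin 1) = Wx K (0 : Fin 1) * Wd K (0 : Fin 1) + 1 := by
  have h := RingQuot.mkAlgHom_rel K (WeylRel.dx (K := K) (n := 1) 0 0)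
  simpa [Wd, Wx, map_mul, map_add, map_one] using h

lemma weylEuler_one_eq (K : Type) [Field K] :
    weylEuler K 1 = Wx K (0 : Fin 1) * Wd K (0 : Fin 1) := by
  simp [weylEuler]

lemma int_pow_smul_cancel {K : Type} [Field K] [CharZero K] {n : ℕ} {M : GWM K n}
    (c : ℤ) (hc : c ≠ 0) (a : ℕ) (z : M.carrier)
    (h : ((c : WeylAlgebra K n) ^ a) • z = 0) : z = 0 := by
  have hW : (c : WeylAlgebra K n) = algebraMap K (WeylAlgebra K n) ((c : ℤ) : K) :=
    (map_intCast (algebraMap K (WeylAlgebra K n)) c).symm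
  have h2 : algebraMap K (WeylAlgebra K n) (((c : ℤ) : K) ^ a) • z = 0 := by
    rw [map_pow, ← hW]; exact h
  have hne : ((c : ℤ) : K) ^ a ≠ 0 := pow_ne_zero a (Int.cast_ne_zero.mpr hc)
  have h3 : (algebraMap K (WeylAlgebra K n) ((((c : ℤ) : K) ^ a)⁻¹) *
      algebraMap K (WeylAlgebra K n) (((c : ℤ) : K) ^ a)) • z = 0 := by
    rw [mul_smul, h2, smul_zero]
  rwa [← map_mul, inv_mul_cancel₀ hne, map_one, one_smul] at h3

/-- If `q • z = s • z` and `s` commutes with `q`, then `q ^ b • z = s ^ b • z`. -/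
lemma pow_smul_of_smul_eq {R M : Type} [Ring R] [AddCommGroup M] [Module R M]
    {q s : R} (h : Commute s q) {z : M} (hz : q • z = s • z) (b : ℕ) :
    (q ^ b) • z = (s ^ b) • z := by
  induction b with
  | zero => simp
  | succ b ih =>
    rw [pow_succ, mul_smul, hz, smul_smul, ← (h.pow_right b).eq, mul_smul, ih,
      smul_smul, ← pow_succ']

/-- `(e - d) ^ b = e * p + (-d) ^ b` for some `p`, when `d` commutes with `e`. -/
lemma sub_pow_decomp {R : Type} [Ring R] {e d : R} (h : Commute d e) (b : ℕ) :
    ∃ p : R, (e - d) ^ b = e * p + (-d) ^ b := by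
  induction b with
  | zero => exact ⟨0, by simp⟩
  | succ b ih =>
    obtain ⟨p, hp⟩ := ih
    refine ⟨(e - d) * p + (-d) ^ b, ?_⟩
    have h1 : d * (e * p) = e * (d * p) := by
      rw [← mul_assoc, h.eq, mul_assoc]
    have h2 : d * (-d) ^ b = -((-d) ^ (b + 1)) := by
      rw [pow_succ', neg_mul, neg_neg]
    rw [pow_succ', hp]
    simp only [mul_add, sub_mul, mul_sub]
    rw [h1, h2]
    abel

end Aux

/-- Let `M` be a generalized Eulerian `A_1(K)`-module.  Then
`H_0(X_1; M) = M/X_1M` and `H_1(X_1; M)` (the kernel of multiplication by `X_1` on `M(-1)`)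
are concentrated in degree `0`:  every homogeneous element of `H_1(X_1; M)` of degree
`j ≠ 0` (i.e. element of `M_{j-1}` killed by `X_1`) vanishes, and every homogeneous element
of `M` of degree `j ≠ 0` lies in `X_1 M`. -/
theorem koszul_X1_concentrated_in_degree_zero
    (K : Type) [Field K] [CharZero K]
    (M : GWM K 1) (hM : M.IsGenEulerian) :
    (∀ (j : ℤ) (z : M.carrier), z ∈ M.deg (j - 1) → Wx K (0 : Fin 1) • z = 0 → j ≠ 0 →
      z = 0) ∧
    (∀ j : ℤ, j ≠ 0 → ∀ m ∈ M.deg j, ∃ w : M.carrier, m = Wx K (0 : Fin 1) • w) := by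
  constructor
  · -- the kernel of `X_1` vanishes outside degree `0`
    intro j z hz hXz hj
    obtain ⟨a, -, hEa⟩ := hM (j - 1) z hz
    have h0 : (Wd K (0 : Fin 1) * Wx K (0 : Fin 1)) • z = 0 := by
      rw [mul_smul, hXz, smul_zero]
    rw [weyl_dx, add_smul, one_smul] at h0
    have hEz : weylEuler K 1 • z = -z := by
      rw [weylEuler_one_eq]; exact eq_neg_of_add_eq_zero_left h0
    have hsmul : (weylEuler K 1 - ((j - 1 : ℤ) : WeylAlgebra K 1)) • z
        = ((-j : ℤ) : WeylAlgebra K 1) • z := by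
      rw [sub_smul, hEz]
      have hcast : ((-j : ℤ) : WeylAlgebra K 1)
          = -1 - ((j - 1 : ℤ) : WeylAlgebra K 1) := by
        push_cast; abel
      rw [hcast, sub_smul, neg_one_smul]
    have key := pow_smul_of_smul_eq (Int.cast_commute (-j) _) hsmul a
    rw [key] at hEa
    exact int_pow_smul_cancel (-j) (neg_ne_zero.mpr hj) a z hEa
  · -- the cokernel of `X_1` vanishes outside degree `0`
    intro j hj m hm
    obtain ⟨a, -, hEa⟩ := hM j m hm
    obtain ⟨p, hp⟩ :=
      sub_pow_decomp (e := weylEuler K 1) (Int.cast_commute (j : ℤ) _) a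
    rw [hp, add_smul] at hEa
    have hneg : ((-((j : ℤ) : WeylAlgebra K 1)) ^ a) • m
        = -((weylEuler K 1 * p) • m) := eq_neg_of_add_eq_zero_right hEa
    have hXform : (weylEuler K 1 * p) • m
        = Wx K (0 : Fin 1) • ((Wd K (0 : Fin 1) * p) • m) := by
      rw [weylEuler_one_eq, mul_assoc, mul_smul]
    have hXm : ((-((j : ℤ) : WeylAlgebra K 1)) ^ a) • m
        = Wx K (0 : Fin 1) • (-((Wd K (0 : Fin 1) * p) • m)) := by
      rw [hneg, hXform, smul_neg]
    have hsc : -((j : ℤ) : WeylAlgebra K 1)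
        = algebraMap K (WeylAlgebra K 1) ((-j : ℤ) : K) := by
      rw [map_intCast, Int.cast_neg]
    have hsne : ((-j : ℤ) : K) ^ a ≠ 0 :=
      pow_ne_zero a (Int.cast_ne_zero.mpr (neg_ne_zero.mpr hj))
    refine ⟨algebraMap K (WeylAlgebra K 1) ((((-j : ℤ) : K) ^ a)⁻¹) •
      (-((Wd K (0 : Fin 1) * p) • m)), ?_⟩
    have hms : algebraMap K (WeylAlgebra K 1) ((((-j : ℤ) : K) ^ a)⁻¹) •
        (((-((j : ℤ) : WeylAlgebra K 1)) ^ a) • m) = m := by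
      rw [hsc, smul_smul, ← map_pow, ← map_mul, inv_mul_cancel₀ hsne, map_one, one_smul]
    calc m = algebraMap K (WeylAlgebra K 1) ((((-j : ℤ) : K) ^ a)⁻¹) •
          (((-((j : ℤ) : WeylAlgebra K 1)) ^ a) • m) := hms.symm
      _ = algebraMap K (WeylAlgebra K 1) ((((-j : ℤ) : K) ^ a)⁻¹) •
          (Wx K (0 : Fin 1) • (-((Wd K (0 : Fin 1) * p) • m))) := by rw [hXm]
      _ = (algebraMap K (WeylAlgebra K 1) ((((-j : ℤ) : K) ^ a)⁻¹) * Wx K (0 : Fin 1)) •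
          (-((Wd K (0 : Fin 1) * p) • m)) := (mul_smul _ _ _).symm
      _ = (Wx K (0 : Fin 1) * algebraMap K (WeylAlgebra K 1) ((((-j : ℤ) : K) ^ a)⁻¹)) •
          (-((Wd K (0 : Fin 1) * p) • m)) := by rw [Algebra.commutes]
      _ = Wx K (0 : Fin 1) • (algebraMap K (WeylAlgebra K 1) ((((-j : ℤ) : K) ^ a)⁻¹) •
          (-((Wd K (0 : Fin 1) * p) • m))) := mul_smul _ _ _
end

section
/- Let M be a generalized Eulerian A_n(K)-module which is finitely generated as an R-module. Then M = 0 or M ≅ R^m as graded R-modules for some m ≥ 1. -/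
/-- The polynomial subring `R = K[X_1, …, X_n]` of the Weyl algebra, as a subset. -/
def RpolySet (K : Type) [Field K] (n : ℕ) : Set (WeylAlgebra K n) :=
  (Algebra.adjoin K (Set.range fun i : Fin n => Wx K i) : Subalgebra K (WeylAlgebra K n))

/-!
Generalized Eulerianity makes `ℰ_n` invertible on every graded piece `M_j` with `j ≠ 0`, so such
a piece equals `∑ X_i M_{j-1}`. As `M` is finitely generated over `R`, its degrees are bounded
below; descending from there gives `M_j = 0` for `j < 0`, and ascending from `0` shows that `M` is
generated over `R` by `M_0`, which is finite-dimensional. A `K`-basis of `M_0` is `R`-free: the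
`∂_k` kill `M_0` (they land in `M_{-1} = 0`), so differentiating a homogeneous relation
`∑ f_i b_i = 0` and applying Euler's identity `∑ X_k ∂_k f = (deg f) f` lowers its degree until
`K`-linear independence applies.
-/

namespace WeylAlgebra

variable {K : Type} [Field K] {n : ℕ}

theorem Wx_mul_Wx (i j : Fin n) : Wx K i * Wx K j = Wx K j * Wx K i := by
  simpa [Wx] using RingQuot.mkAlgHom_rel K (WeylRel.xx (K := K) (n := n) i j)

theorem Wd_mul_Wx (i j : Fin n) :
    Wd K i * Wx K j = Wx K j * Wd K i + if i = j then 1 else 0 := by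
  have := RingQuot.mkAlgHom_rel K (WeylRel.dx (K := K) (n := n) i j)
  rw [map_mul, map_add, map_mul, apply_ite (RingQuot.mkAlgHom K (WeylRel K n)),
    map_one, map_zero] at this
  simpa [Wx, Wd] using this

variable (K n) in
/-- `{f | IsHomogPoly K f d}` as a `K`-subspace. -/
noncomputable abbrev homogPolys (d : ℕ) : Submodule K (WeylAlgebra K n) :=
  Submodule.span K (xMonomials K n d)

theorem prod_map_Wx_mem_homogPolys (l : List (Fin n)) :
    (l.map (Wx K)).prod ∈ homogPolys K n l.length :=
  Submodule.subset_span ⟨l, rfl, rfl⟩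

theorem one_mem_homogPolys_zero : (1 : WeylAlgebra K n) ∈ homogPolys K n 0 :=
  prod_map_Wx_mem_homogPolys []

theorem Wx_mul_mem_homogPolys {d : ℕ} (i : Fin n) {f : WeylAlgebra K n}
    (hf : f ∈ homogPolys K n d) : Wx K i * f ∈ homogPolys K n (d + 1) := by
  induction hf using Submodule.span_induction with
  | mem x hx =>
    obtain ⟨l, rfl, rfl⟩ := hx
    simpa using prod_map_Wx_mem_homogPolys (i :: l)
  | zero => simp
  | add x y _ _ hx hy => rw [mul_add]; exact add_mem hx hy
  | smul c x _ hx => rw [mul_smul_comm]; exact Submodule.smul_mem _ _ hx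

theorem exists_algebraMap_eq_of_mem_homogPolys_zero {f : WeylAlgebra K n}
    (hf : f ∈ homogPolys K n 0) : ∃ c : K, f = algebraMap K (WeylAlgebra K n) c := by
  have hmono : xMonomials K n 0 = {1} := by
    ext w
    simp [xMonomials, List.length_eq_zero_iff]
  rw [homogPolys, hmono, Submodule.mem_span_singleton] at hf
  obtain ⟨c, rfl⟩ := hf
  exact ⟨c, (Algebra.algebraMap_eq_smul_one c).symm⟩

theorem xMonomials_finite (d : ℕ) : (xMonomials K n d).Finite := by
  refine (Set.finite_range fun t : Fin d → Fin n => ((List.ofFn t).map (Wx K)).prod).subset ?_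
  rintro w ⟨l, rfl, rfl⟩
  exact ⟨l.get, by simp only [List.ofFn_get]⟩

instance (d : ℕ) : FiniteDimensional K (homogPolys K n d) :=
  FiniteDimensional.span_of_finite K (xMonomials_finite d)

theorem mem_iSup_homogPolys_of_mem_RpolySet {r : WeylAlgebra K n} (hr : r ∈ RpolySet K n) :
    r ∈ ⨆ d, homogPolys K n d := by
  change r ∈ Subalgebra.toSubmodule (Algebra.adjoin K _) at hr
  rw [Algebra.adjoin_eq_span] at hr
  refine Submodule.span_le.mpr (fun x hx => ?_) hr
  suffices ∃ d, x ∈ homogPolys K n d from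
    this.elim fun d hd => Submodule.mem_iSup_of_mem d hd
  induction hx using Submonoid.closure_induction_left with
  | one => exact ⟨0, one_mem_homogPolys_zero⟩
  | mul_left _ hx y _ hy =>
    obtain ⟨⟨i, rfl⟩, d, hd⟩ := And.intro hx hy
    exact ⟨d + 1, Wx_mul_mem_homogPolys i hd⟩

theorem exists_Wd_mul_prod_map_Wx_eq (a : Fin n) (l : List (Fin n)) :
    ∃ g : Fin n → WeylAlgebra K n, (∀ i, g i ∈ homogPolys K n l.length) ∧
      (∀ i, Wd K i * ((a :: l).map (Wx K)).prod = ((a :: l).map (Wx K)).prod * Wd K i + g i) ∧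
      ∑ i, Wx K i * g i = (l.length + 1) • ((a :: l).map (Wx K)).prod := by
  induction l generalizing a with
  | nil =>
    refine ⟨fun i => if i = a then 1 else 0, fun i => ?_, fun i => ?_, ?_⟩
    · dsimp only
      split_ifs
      exacts [one_mem_homogPolys_zero, zero_mem _]
    · simpa using Wd_mul_Wx (K := K) i a
    · simp
  | cons b t ih =>
    obtain ⟨g, hg_mem, hg_comm, hg_euler⟩ := ih b
    set p := ((b :: t).map (Wx K)).prod
    have hprod : ((a :: b :: t).map (Wx K)).prod = Wx K a * p := List.prod_cons
    refine ⟨fun i => Wx K a * g i + if i = a then p else 0, fun i => ?_, fun i => ?_, ?_⟩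
    · refine add_mem (Wx_mul_mem_homogPolys a (hg_mem i)) ?_
      split_ifs
      exacts [prod_map_Wx_mem_homogPolys _, zero_mem _]
    · rw [hprod, ← mul_assoc, Wd_mul_Wx, add_mul, mul_assoc, hg_comm]
      simp only [mul_add, mul_assoc, ite_mul, one_mul, zero_mul]
      abel
    · have hterm : ∀ i, Wx K i * (Wx K a * g i + if i = a then p else 0)
          = Wx K a * (Wx K i * g i) + if i = a then Wx K a * p else 0 := by
        intro i
        split_ifs with h
        · rw [h, mul_add, ← mul_assoc, Wx_mul_Wx, mul_assoc]
        · rw [mul_add, ← mul_assoc, Wx_mul_Wx, mul_assoc, mul_zero]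
      simp only [hterm, Finset.sum_add_distrib, ← Finset.mul_sum, hg_euler, Finset.sum_ite_eq',
        Finset.mem_univ, if_true, hprod, mul_smul_comm, List.length_cons,
        succ_nsmul _ (t.length + 1)]

theorem exists_Wd_mul_eq_of_mem_homogPolys {d : ℕ} {f : WeylAlgebra K n}
    (hf : f ∈ homogPolys K n (d + 1)) :
    ∃ g : Fin n → WeylAlgebra K n, (∀ i, g i ∈ homogPolys K n d) ∧
      (∀ i, Wd K i * f = f * Wd K i + g i) ∧ ∑ i, Wx K i * g i = (d + 1) • f := by
  induction hf using Submodule.span_induction with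
  | mem x hx =>
    obtain ⟨_ | ⟨a, l⟩, hl, rfl⟩ := hx
    · simp at hl
    · obtain rfl : l.length = d := by simpa using hl
      exact exists_Wd_mul_prod_map_Wx_eq a l
  | zero => exact ⟨0, fun _ => zero_mem _, by simp, by simp⟩
  | add x y _ _ hx hy =>
    obtain ⟨g, hg_mem, hg_comm, hg_euler⟩ := hx
    obtain ⟨g', hg'_mem, hg'_comm, hg'_euler⟩ := hy
    refine ⟨g + g', fun i => add_mem (hg_mem i) (hg'_mem i), fun i => ?_, ?_⟩
    · simp only [Pi.add_apply, mul_add, add_mul, hg_comm, hg'_comm]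
      abel
    · simp only [Pi.add_apply, mul_add, Finset.sum_add_distrib, hg_euler, hg'_euler, smul_add]
  | smul c x _ hx =>
    obtain ⟨g, hg_mem, hg_comm, hg_euler⟩ := hx
    refine ⟨c • g, fun i => Submodule.smul_mem _ _ (hg_mem i), fun i => ?_, ?_⟩
    · simp only [Pi.smul_apply, mul_smul_comm, smul_mul_assoc, hg_comm, smul_add]
    · simp only [Pi.smul_apply, mul_smul_comm, ← Finset.smul_sum, hg_euler, smul_comm c]

variable [CharZero K] {V : Type*} [AddCommGroup V] [Module (WeylAlgebra K n) V] [Module K V]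
  [IsScalarTower K (WeylAlgebra K n) V]

theorem eq_zero_of_sum_smul_eq_zero_of_mem_homogPolys {ι : Type*} [Fintype ι] {b : ι → V}
    (hb : LinearIndependent K b) (hb_Wd : ∀ (k : Fin n) i, Wd K k • b i = 0) (d : ℕ)
    {f : ι → WeylAlgebra K n} (hf : ∀ i, f i ∈ homogPolys K n d) (h : ∑ i, f i • b i = 0) :
    f = 0 := by
  induction d generalizing f with
  | zero =>
    choose c hc using fun i => exists_algebraMap_eq_of_mem_homogPolys_zero (hf i)
    simp only [hc, algebraMap_smul] at h
    ext i
    rw [hc, Fintype.linearIndependent_iff.mp hb c h i, map_zero, Pi.zero_apply]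
  | succ d ih =>
    choose g hg_mem hg_comm hg_euler using fun i => exists_Wd_mul_eq_of_mem_homogPolys (hf i)
    have hg : ∀ k, (fun i => g i k) = 0 := fun k => ih (fun i => hg_mem i k) <| by
      have hk := congrArg (Wd K k • ·) h
      simp only [smul_zero, Finset.smul_sum, smul_smul, hg_comm, add_smul] at hk
      simpa only [mul_smul, hb_Wd, smul_zero, zero_add] using hk
    ext i
    have hsmul : ((d + 1 : ℕ) : K) • f i = 0 := by
      rw [Nat.cast_smul_eq_nsmul, ← hg_euler]
      exact Finset.sum_eq_zero fun k _ => by rw [congrFun (hg k) i, Pi.zero_apply, mul_zero]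
    exact (smul_eq_zero.mp hsmul).resolve_left (Nat.cast_ne_zero.mpr d.succ_ne_zero)

end WeylAlgebra

section AdjoinAction

variable {K A M : Type*} [Field K] [Ring A] [Algebra K A] [AddCommGroup M] [Module A M]
  [Module K M] [IsScalarTower K A M]

theorem smul_mem_of_mem_adjoin {s : Set A} {N : Submodule K M}
    (hs : ∀ a ∈ s, ∀ x ∈ N, a • x ∈ N) {a : A} (ha : a ∈ Algebra.adjoin K s) {x : M}
    (hx : x ∈ N) : a • x ∈ N := by
  induction ha using Algebra.adjoin_induction generalizing x with
  | mem a ha => exact hs a ha x hx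
  | algebraMap c => rw [algebraMap_smul]; exact N.smul_mem c hx
  | add a b _ _ ha hb => rw [add_smul]; exact add_mem (ha hx) (hb hx)
  | mul a b _ _ ha hb => rw [mul_smul]; exact ha (hb hx)

open Polynomial in
/-- Writing `(T - c)^a = T q(T) + (-c)^a` inverts `e` on vectors killed by `(e - c)^a`. -/
theorem exists_mem_adjoin_singleton_eq_mul_smul {e : A} {c : K} (hc : c ≠ 0) {a : ℕ} {x : M}
    (hx : (e - algebraMap K A c) ^ a • x = 0) :
    ∃ u ∈ Algebra.adjoin K {e}, x = (e * u) • x := by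
  obtain ⟨q, hq⟩ := X_dvd_sub_C (p := (X - C c) ^ a)
  set p₀ := ((X - C c) ^ a).coeff 0
  have hp₀ : p₀ ≠ 0 := by
    simpa [p₀, coeff_zero_eq_eval_zero] using pow_ne_zero a (neg_ne_zero.mpr hc)
  have haeval : (e - algebraMap K A c) ^ a = e * aeval e q + algebraMap K A p₀ := by
    simpa [sub_eq_iff_eq_add] using congrArg (aeval e) hq
  refine ⟨-p₀⁻¹ • aeval e q, Subalgebra.smul_mem _ (aeval_mem_adjoin_singleton K e) _, ?_⟩
  rw [haeval, add_smul, algebraMap_smul, add_eq_zero_iff_eq_neg] at hx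
  rw [mul_smul_comm, smul_assoc, hx, smul_neg, smul_smul, neg_mul, inv_mul_cancel₀ hp₀, neg_smul,
    one_smul, neg_neg]

end AdjoinAction

namespace GWM

open WeylAlgebra

variable {K : Type} [Field K] {n : ℕ} (M : GWM K n)

noncomputable instance : Module K M := Module.compHom M (algebraMap K (WeylAlgebra K n))

instance : IsScalarTower K (WeylAlgebra K n) M :=
  ⟨fun c a x => by rw [Algebra.smul_def, mul_smul]; rfl⟩

def degSubmodule (j : ℤ) : Submodule K M :=
  { M.deg j with smul_mem' := fun c x hx => M.k_smul c j x hx }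

@[simp]
theorem mem_degSubmodule {j : ℤ} {x : M} : x ∈ M.degSubmodule j ↔ x ∈ M.deg j := Iff.rfl

noncomputable instance : DirectSum.Decomposition M.degSubmodule :=
  DirectSum.IsInternal.chooseDecomposition M.degSubmodule M.isInternal

noncomputable def proj (j : ℤ) : M →ₗ[K] M :=
  (M.degSubmodule j).subtype ∘ₗ DirectSum.component K ℤ (fun j => M.degSubmodule j) j ∘ₗ
    (DirectSum.decomposeLinearEquiv M.degSubmodule).toLinearMap

theorem proj_apply (j : ℤ) (x : M) : M.proj j x = DirectSum.decompose M.degSubmodule x j := rfl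

def ShiftsDeg (a : WeylAlgebra K n) (e : ℤ) : Prop :=
  ∀ j, ∀ x ∈ M.deg j, a • x ∈ M.deg (j + e)

noncomputable def degGE (s : ℤ) : Submodule K M :=
  ⨅ (k : ℤ) (_ : k < s), LinearMap.ker (M.proj k)

variable {M}

theorem proj_mem (j : ℤ) (x : M) : M.proj j x ∈ M.deg j :=
  (DirectSum.decompose M.degSubmodule x j).2

theorem proj_of_mem_same {j : ℤ} {x : M} (hx : x ∈ M.deg j) : M.proj j x = x :=
  DirectSum.decompose_of_mem_same M.degSubmodule hx

theorem proj_of_mem_ne {j k : ℤ} {x : M} (hx : x ∈ M.deg j) (hjk : j ≠ k) : M.proj k x = 0 :=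
  DirectSum.decompose_of_mem_ne M.degSubmodule hx hjk

theorem exists_finset_sum_proj_eq (x : M) :
    ∃ T : Finset ℤ, (∀ j ∉ T, M.proj j x = 0) ∧ ∑ j ∈ T, M.proj j x = x := by
  classical
  refine ⟨(DirectSum.decompose M.degSubmodule x).support, fun j hj => ?_,
    DirectSum.sum_support_decompose M.degSubmodule x⟩
  rw [proj_apply, DFinsupp.notMem_support_iff.mp hj, ZeroMemClass.coe_zero]

theorem eq_top_of_forall_mem_deg {H : AddSubgroup M} (hH : ∀ j, ∀ x ∈ M.deg j, x ∈ H) :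
    H = ⊤ := by
  refine eq_top_iff.mpr fun x _ => ?_
  obtain ⟨T, -, hT⟩ := exists_finset_sum_proj_eq x
  exact hT ▸ H.sum_mem fun j _ => hH j _ (proj_mem j x)

theorem shiftsDeg_Wx (i : Fin n) : M.ShiftsDeg (Wx K i) 1 := M.x_smul i

theorem shiftsDeg_Wd (i : Fin n) : M.ShiftsDeg (Wd K i) (-1) := M.d_smul i

theorem shiftsDeg_of_mem_homogPolys {d : ℕ} {f : WeylAlgebra K n}
    (hf : f ∈ homogPolys K n d) : M.ShiftsDeg f d := by
  induction hf using Submodule.span_induction with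
  | mem w hw =>
    obtain ⟨l, rfl, rfl⟩ := hw
    induction l with
    | nil => exact fun j x hx => by simpa using hx
    | cons a t ih =>
      intro j x hx
      rw [List.map_cons, List.prod_cons, mul_smul, List.length_cons, Nat.cast_succ,
        ← add_assoc]
      exact shiftsDeg_Wx a _ _ (ih j x hx)
  | zero => exact fun j x _ => by simp
  | add f g _ _ hf hg => exact fun j x hx => by rw [add_smul]; exact add_mem (hf j x hx) (hg j x hx)
  | smul c f _ hf => exact fun j x hx => by rw [smul_assoc]; exact M.k_smul c _ _ (hf j x hx)

theorem shiftsDeg_weylEuler : M.ShiftsDeg (weylEuler K n) 0 := by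
  intro j x hx
  rw [weylEuler, Finset.sum_smul]
  refine AddSubgroup.sum_mem _ fun i _ => ?_
  rw [mul_smul]
  simpa using shiftsDeg_Wx i _ _ (shiftsDeg_Wd i j x hx)

theorem proj_smul_of_shiftsDeg {a : WeylAlgebra K n} {e : ℤ} (ha : M.ShiftsDeg a e) (k : ℤ)
    (x : M) : M.proj (k + e) (a • x) = a • M.proj k x := by
  obtain ⟨T, hT_zero, hT_sum⟩ := exists_finset_sum_proj_eq x
  conv_lhs => rw [← hT_sum, Finset.smul_sum, map_sum]
  rw [Finset.sum_eq_single k (fun j _ hjk => proj_of_mem_ne (ha j _ (proj_mem j x)) (by omega))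
    (fun hk => by rw [hT_zero k hk, smul_zero, map_zero]),
    proj_of_mem_same (ha k _ (proj_mem k x))]

theorem mem_degGE {s : ℤ} {x : M} : x ∈ M.degGE s ↔ ∀ k < s, M.proj k x = 0 := by
  simp [degGE, Submodule.mem_iInf]

theorem degGE_antitone : Antitone M.degGE := fun _ _ hst _ hx =>
  mem_degGE.mpr fun k hk => mem_degGE.mp hx k (hk.trans_le hst)

theorem exists_mem_degGE (x : M) : ∃ s, x ∈ M.degGE s := by
  obtain ⟨T, hT_zero, -⟩ := exists_finset_sum_proj_eq x
  obtain ⟨s, hs⟩ := T.bddBelow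
  exact ⟨s, mem_degGE.mpr fun k hk => hT_zero k fun hkT => (hs hkT).not_gt hk⟩

theorem smul_mem_degGE_of_shiftsDeg {a : WeylAlgebra K n} {e : ℤ} (ha : M.ShiftsDeg a e)
    {s : ℤ} {x : M} (hx : x ∈ M.degGE s) : a • x ∈ M.degGE (s + e) := by
  refine mem_degGE.mpr fun k hk => ?_
  rw [← sub_add_cancel k e, proj_smul_of_shiftsDeg ha, mem_degGE.mp hx _ (by omega), smul_zero]

theorem smul_mem_degGE_of_mem_RpolySet {r : WeylAlgebra K n} (hr : r ∈ RpolySet K n) {s : ℤ}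
    {x : M} (hx : x ∈ M.degGE s) : r • x ∈ M.degGE s := by
  refine smul_mem_of_mem_adjoin ?_ hr hx
  rintro _ ⟨i, rfl⟩ y hy
  exact degGE_antitone (by omega) (smul_mem_degGE_of_shiftsDeg (shiftsDeg_Wx i) hy)

theorem proj_finsuppSum_smul {f : ℕ →₀ WeylAlgebra K n} (hf : ∀ d, f d ∈ homogPolys K n d)
    {x : M} (hx : x ∈ M.deg 0) (d : ℕ) :
    M.proj d ((f.sum fun _ a => a) • x) = f d • x := by
  have hmem : ∀ e : ℕ, f e • x ∈ M.deg e := fun e => by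
    simpa using shiftsDeg_of_mem_homogPolys (hf e) 0 x hx
  rw [Finsupp.sum, Finset.sum_smul, map_sum, Finset.sum_eq_single d
    (fun e _ hed => proj_of_mem_ne (hmem e) (by omega))
    (fun hd => by rw [Finsupp.notMem_support_iff.mp hd, zero_smul, map_zero]),
    proj_of_mem_same (hmem d)]

variable {ι : Type*}

variable (M) in
def polySpan (g : ι → M) : AddSubgroup M :=
  AddSubgroup.closure {x | ∃ r ∈ RpolySet K n, ∃ i, x = r • g i}

theorem polySpan_le {g : ι → M} {H : AddSubgroup M} (h : ∀ r ∈ RpolySet K n, ∀ i, r • g i ∈ H) :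
    M.polySpan g ≤ H :=
  (AddSubgroup.closure_le H).mpr <| by rintro _ ⟨r, hr, i, rfl⟩; exact h r hr i

theorem smul_mem_polySpan {g : ι → M} {r : WeylAlgebra K n} (hr : r ∈ RpolySet K n) {x : M}
    (hx : x ∈ M.polySpan g) : r • x ∈ M.polySpan g := by
  induction hx using AddSubgroup.closure_induction with
  | mem x hx =>
    obtain ⟨r', hr', i, rfl⟩ := hx
    exact AddSubgroup.subset_closure
      ⟨r * r', (Algebra.adjoin K _).mul_mem hr hr', i, (mul_smul r r' (g i)).symm⟩
  | zero => rw [smul_zero]; exact zero_mem _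
  | add x y _ _ hx hy => rw [smul_add]; exact add_mem hx hy
  | neg x _ hx => rw [smul_neg]; exact neg_mem hx

theorem exists_forall_mem_degGE [Finite ι] (g : ι → M) : ∃ s, ∀ i, g i ∈ M.degGE s := by
  choose s hs using fun i => exists_mem_degGE (g i)
  obtain ⟨s₀, hs₀⟩ := Finite.exists_ge s
  exact ⟨s₀, fun i => degGE_antitone (hs₀ i) (hs i)⟩

theorem exists_forall_lt_deg_eq_zero [Finite ι] {g : ι → M} (hg : M.polySpan g = ⊤) :
    ∃ s, ∀ j < s, ∀ x ∈ M.deg j, x = 0 := by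
  obtain ⟨s, hs⟩ := exists_forall_mem_degGE g
  have hle : M.polySpan g ≤ (M.degGE s).toAddSubgroup :=
    polySpan_le fun r hr i => smul_mem_degGE_of_mem_RpolySet hr (hs i)
  refine ⟨s, fun j hj x hx => ?_⟩
  rw [← proj_of_mem_same hx]
  exact mem_degGE.mp (hle (hg ▸ AddSubgroup.mem_top x)) j hj

theorem finiteDimensional_degSubmodule_zero [Finite ι] {g : ι → M} (hg : M.polySpan g = ⊤) :
    FiniteDimensional K (M.degSubmodule 0) := by
  obtain ⟨s, hs⟩ := exists_forall_mem_degGE g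
  let φ : ι → WeylAlgebra K n →ₗ[K] M := fun i =>
    M.proj 0 ∘ₗ (LinearMap.toSpanSingleton (WeylAlgebra K n) M (g i)).restrictScalars K
  -- only the homogeneous parts of degree `≤ -s` of `r` contribute to `(r • g i)₀`
  let V : Submodule K M := ⨆ (i : ι) (d : Fin ((-s).toNat + 1)), (homogPolys K n d).map (φ i)
  have hV : ∀ i, ∀ r ∈ RpolySet K n, M.proj 0 (r • g i) ∈ V := by
    intro i r hr
    refine Submodule.iSup_induction _ (motive := fun r => M.proj 0 (r • g i) ∈ V)
      (mem_iSup_homogPolys_of_mem_RpolySet hr) (fun d f hf => ?_) (by simp)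
      (fun f f' hf hf' => by rw [add_smul, map_add]; exact add_mem hf hf')
    by_cases hd : d ≤ (-s).toNat
    · exact Submodule.mem_iSup_of_mem i <| Submodule.mem_iSup_of_mem ⟨d, by omega⟩ <|
        Submodule.mem_map_of_mem hf
    · have hfg := smul_mem_degGE_of_shiftsDeg (shiftsDeg_of_mem_homogPolys hf) (hs i)
      rw [mem_degGE.mp hfg 0 (by omega)]
      exact zero_mem _
  have hle : M.polySpan g ≤ (V.comap (M.proj 0)).toAddSubgroup :=
    polySpan_le fun r hr i => hV i r hr
  have h0 : M.degSubmodule 0 ≤ V := fun x hx =>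
    proj_of_mem_same (M := M) hx ▸ hle (hg ▸ AddSubgroup.mem_top x)
  exact Submodule.finiteDimensional_of_le h0

variable [CharZero K]

theorem exists_eq_sum_Wx_smul (hM : M.IsGenEulerian) {j : ℤ} (hj : j ≠ 0) {x : M}
    (hx : x ∈ M.deg j) :
    ∃ y : Fin n → M, (∀ i, y i ∈ M.deg (j - 1)) ∧ x = ∑ i, Wx K i • y i := by
  obtain ⟨a, -, ha⟩ := hM j x hx
  rw [← map_intCast (algebraMap K (WeylAlgebra K n))] at ha
  obtain ⟨u, hu, hxu⟩ := exists_mem_adjoin_singleton_eq_mul_smul (Int.cast_ne_zero.mpr hj) ha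
  have hux : u • x ∈ M.deg j := by
    refine smul_mem_of_mem_adjoin (N := M.degSubmodule j) ?_ hu hx
    rintro _ rfl y hy
    simpa using shiftsDeg_weylEuler (M := M) j y hy
  refine ⟨fun i => Wd K i • u • x, fun i => M.d_smul i j _ hux, ?_⟩
  calc x = (weylEuler K n * u) • x := hxu
    _ = ∑ i, Wx K i • Wd K i • u • x := by
      simp only [weylEuler, mul_smul, Finset.sum_smul]

theorem forall_neg_deg_eq_zero (hM : M.IsGenEulerian) {s : ℤ}
    (hs : ∀ j < s, ∀ x ∈ M.deg j, x = 0) : ∀ j < 0, ∀ x ∈ M.deg j, x = 0 := by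
  intro j
  rcases lt_or_ge j (s - 1) with hjs | hsj
  · exact fun _ => hs j (by omega)
  induction j, hsj using Int.leInduction with
  | base => exact fun _ => hs _ (by omega)
  | succ k _ ih =>
    intro hk x hx
    obtain ⟨y, hy, rfl⟩ := exists_eq_sum_Wx_smul hM (by omega) hx
    have hy_zero : ∀ i, y i = 0 := fun i => ih (by omega) _ (by simpa using hy i)
    simp [hy_zero]

variable [Fintype ι]

theorem polySpan_eq_top (hM : M.IsGenEulerian) (hneg : ∀ j < 0, ∀ x ∈ M.deg j, x = 0)
    {b : ι → M} (hb : Submodule.span K (Set.range b) = M.degSubmodule 0) : M.polySpan b = ⊤ := by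
  have hnat : ∀ d : ℕ, ∀ x ∈ M.deg d, x ∈ M.polySpan b := by
    intro d
    induction d with
    | zero =>
      intro x hx
      obtain ⟨c, rfl⟩ := (Submodule.mem_span_range_iff_exists_fun K).mp
        (hb ▸ (by simpa using hx) : x ∈ Submodule.span K (Set.range b))
      exact AddSubgroup.sum_mem _ fun i _ => AddSubgroup.subset_closure
        ⟨_, Subalgebra.algebraMap_mem _ (c i), i, (algebraMap_smul _ (c i) (b i)).symm⟩
    | succ d ih =>
      intro x hx
      obtain ⟨y, hy, rfl⟩ := exists_eq_sum_Wx_smul hM (by omega) hx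
      exact AddSubgroup.sum_mem _ fun i _ =>
        smul_mem_polySpan (Algebra.subset_adjoin ⟨i, rfl⟩) (ih _ (by simpa using hy i))
  refine eq_top_of_forall_mem_deg fun j x hx => ?_
  rcases lt_or_ge j 0 with hj | hj
  · rw [hneg j hj x hx]
    exact zero_mem _
  · lift j to ℕ using hj
    exact hnat j x hx

theorem eq_zero_of_sum_smul_eq_zero {b : ι → M} (hb : LinearIndependent K b)
    (hb_deg : ∀ i, b i ∈ M.deg 0) (hneg : ∀ x ∈ M.deg (-1), x = 0) {r : ι → WeylAlgebra K n}
    (hr : ∀ i, r i ∈ RpolySet K n) (h : ∑ i, r i • b i = 0) : ∀ i, r i = 0 := by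
  choose f hf hf_sum using fun i => (Submodule.mem_iSup_iff_exists_finsupp _ _).mp
    (mem_iSup_homogPolys_of_mem_RpolySet (hr i))
  have hf_zero : ∀ d : ℕ, (fun i => f i d) = 0 := fun d =>
    eq_zero_of_sum_smul_eq_zero_of_mem_homogPolys hb
      (fun k i => hneg _ (by simpa using shiftsDeg_Wd k 0 _ (hb_deg i))) d (fun i => hf i d) <| by
        simpa [← hf_sum, proj_finsuppSum_smul (hf _) (hb_deg _)] using congrArg (M.proj d) h
  intro i
  rw [← hf_sum i, show f i = 0 from Finsupp.ext fun d => congrFun (hf_zero d) i,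
    Finsupp.sum_zero_index]

end GWM

/-- Let `M` be a generalized Eulerian `A_n(K)`-module which is finitely
generated as a module over `R = K[X_1, …, X_n] ⊆ A_n(K)`.  Then `M = 0` or `M ≅ R^m` as
graded `R`-modules for some `m ≥ 1` (i.e. `M` is free over `R` on `m` homogeneous
generators of degree `0`). -/
theorem generalizedEulerian_finite_over_R_is_free
    (K : Type) [Field K] [CharZero K] (n : ℕ)
    (M : GWM K n) (hM : M.IsGenEulerian)
    (hfg : ∃ (p : ℕ) (g : Fin p → M.carrier),
      AddSubgroup.closure {x : M.carrier | ∃ r ∈ RpolySet K n, ∃ i, x = r • g i} = ⊤) :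
    (∀ m : M.carrier, m = 0) ∨
    ∃ m : ℕ, 1 ≤ m ∧ ∃ b : Fin m → M.carrier,
      (∀ i, b i ∈ M.deg 0) ∧
      AddSubgroup.closure {x : M.carrier | ∃ r ∈ RpolySet K n, ∃ i, x = r • b i} = ⊤ ∧
      (∀ r : Fin m → WeylAlgebra K n, (∀ i, r i ∈ RpolySet K n) →
        (∑ i, r i • b i) = 0 → ∀ i, r i = 0) := by
  obtain ⟨p, g, hg⟩ := hfg
  obtain ⟨s, hs⟩ := GWM.exists_forall_lt_deg_eq_zero (M := M) hg
  have hneg := GWM.forall_neg_deg_eq_zero hM hs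
  have := GWM.finiteDimensional_degSubmodule_zero (M := M) hg
  let B := Module.finBasis K (M.degSubmodule 0)
  let b := (M.degSubmodule 0).subtype ∘ B
  have hb_span : Submodule.span K (Set.range b) = M.degSubmodule 0 := by
    rw [Set.range_comp, ← Submodule.map_span, B.span_eq, Submodule.map_subtype_top]
  have hb_li : LinearIndependent K b := B.linearIndependent.map' _ (Submodule.ker_subtype _)
  have htop := GWM.polySpan_eq_top hM hneg hb_span
  rcases Nat.eq_zero_or_pos (Module.finrank K (M.degSubmodule 0)) with h0 | hpos
  · refine Or.inl fun x => ?_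
    have hbot : M.polySpan b ≤ ⊥ := GWM.polySpan_le fun _ _ i => (Fin.cast h0 i).elim0
    exact hbot (htop ▸ AddSubgroup.mem_top x)
  · exact Or.inr ⟨_, hpos, b, fun i => (B i).2, htop, fun r hr =>
      GWM.eq_zero_of_sum_smul_eq_zero hb_li (fun i => (B i).2) (hneg (-1) (by norm_num)) hr⟩
end
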